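/- Let v_1, ..., v_m be real numbers such that |v_i| ≥ λ for at least k values of i, where λ > 0 and k ≥ 1. Let a_1, ..., a_m be independent uniform random signs in {-1, +1}. Then for all x ≥ 1, P(|a_1 v_1 + ... + a_m v_m| ≤ xλ) = O(x/√k), i.e., there is an absolute constant C such that this probability is at most C x/√k. -/

import Mathlib

open MeasureTheory

/-- The uniform probability measure on `{-1,+1}^m`-indexed sign patterns: this models `m`
iid uniform random signs. -/
noncomputable def rowMeasure (m : ℕ) : Measure (Fin m → Bool) :=
  (PMF.uniformOfFintype (Fin m → Bool)).toMeasure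

/-- The `±1` sign associated to a boolean. -/
def sgn (b : Bool) : ℝ := if b then 1 else -1

/-!
Erdős's proof. Fix the signs outside the set `B` of the `n ≥ k` coordinates with `|v i| ≥ λ`.
For the signs on `B`, record the set `t ⊆ B` of indices whose term `a i * v i` is nonnegative: the
sum is then `2 * ∑ i ∈ t, |v i|` plus a constant, and the sign pattern is determined by `t`.
Enlarging `t` increases `∑ i ∈ t, |v i|` by at least `λ`, so the sets whose sum lies in a
half-open window of length `λ` form an antichain, of size at most `C(n, n/2)` by Sperner, and
`⌊x⌋ + 1` such windows cover an interval of length `x λ`. Since `C(n, n/2) ≤ 2ⁿ / √(n + 1)`,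
the probability is at most `2 x / √(n + 1) ≤ 2 x / √k`.
-/

open Finset Fintype

namespace Nat

theorem centralBinom_sq_mul_le (n : ℕ) : n.centralBinom ^ 2 * (2 * n + 1) ≤ 16 ^ n := by
  induction n with
  | zero => simp
  | succ n ih =>
    refine Nat.le_of_mul_le_mul_right (c := (n + 1) ^ 2) ?_ (by positivity)
    calc (n + 1).centralBinom ^ 2 * (2 * (n + 1) + 1) * (n + 1) ^ 2
        = ((n + 1) * (n + 1).centralBinom) ^ 2 * (2 * n + 3) := by ring
      _ = 4 * (2 * n + 1) * (2 * n + 3) * (n.centralBinom ^ 2 * (2 * n + 1)) := by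
        rw [succ_mul_centralBinom_succ]; ring
      _ ≤ 16 * (n + 1) ^ 2 * 16 ^ n := Nat.mul_le_mul (by nlinarith) ih
      _ = 16 ^ (n + 1) * (n + 1) ^ 2 := by ring

theorem choose_half_sq_mul_le (n : ℕ) : n.choose (n / 2) ^ 2 * (n + 1) ≤ 4 ^ n := by
  obtain ⟨j, rfl | rfl⟩ := n.even_or_odd'
  · rw [Nat.mul_div_cancel_left j two_pos, ← centralBinom_eq_two_mul_choose, pow_mul]
    exact centralBinom_sq_mul_le j
  · have hhalf : (2 * j + 1) / 2 = j := by omega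
    have hcentral : (j + 1).centralBinom = 2 * (2 * j + 1).choose j := by
      rw [centralBinom_eq_two_mul_choose, show 2 * (j + 1) = 2 * j + 1 + 1 by ring,
        choose_succ_succ', choose_symm_half]
      ring
    have h := centralBinom_sq_mul_le (j + 1)
    rw [hcentral, pow_succ 16] at h
    rw [hhalf, pow_succ 4, pow_mul]
    norm_num at h ⊢
    nlinarith

end Nat

theorem choose_half_div_two_pow_le (n : ℕ) :
    (n.choose (n / 2) : ℝ) / 2 ^ n ≤ 1 / √(n + 1) := by
  rw [div_le_div_iff₀ (by positivity) (by positivity), one_mul]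
  refine (pow_le_pow_iff_left₀ (by positivity) (by positivity) two_ne_zero).1 ?_
  rw [mul_pow, Real.sq_sqrt (by positivity), ← pow_mul, mul_comm n 2, pow_mul]
  exact_mod_cast Nat.choose_half_sq_mul_le n

section Sperner

variable {α : Type*} [Fintype α]

theorem card_filter_sum_mem_Ico_le {g : α → ℝ} {lam : ℝ} (hlam : 0 ≤ lam)
    (hg : ∀ i, lam ≤ g i) (c : ℝ) :
    #{t : Finset α | ∑ i ∈ t, g i ∈ Set.Ico c (c + lam)} ≤ (card α).choose (card α / 2) := by
  classical
  refine IsAntichain.sperner fun t ht t' ht' hne (hsub : t ⊆ t') => ?_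
  simp only [coe_filter, Set.mem_ofPred_eq, Set.mem_Ico, mem_univ, true_and] at ht ht'
  obtain ⟨i, hit', hit⟩ := exists_of_ssubset (hsub.ssubset_of_ne hne)
  have hgain : lam ≤ ∑ j ∈ t' \ t, g j :=
    (hg i).trans <| single_le_sum (fun j _ => hlam.trans (hg j)) (mem_sdiff.2 ⟨hit', hit⟩)
  linarith [sum_sdiff hsub (f := g)]

theorem card_filter_sum_mem_Icc_le {g : α → ℝ} {lam : ℝ} (hlam : 0 < lam)
    (hg : ∀ i, lam ≤ g i) (a x : ℝ) :
    #{t : Finset α | ∑ i ∈ t, g i ∈ Set.Icc a (a + x * lam)}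
      ≤ (card α).choose (card α / 2) * (⌊x⌋₊ + 1) := by
  set window : Finset α → ℕ := fun t => ⌊(∑ i ∈ t, g i - a) / lam⌋₊
  refine (card_le_mul_card_image_of_maps_to (f := window) (t := range (⌊x⌋₊ + 1)) ?_ _ ?_).trans
    (by rw [card_range])
  · intro t ht
    simp only [mem_filter, mem_univ, true_and, Set.mem_Icc] at ht
    refine mem_range.2 (Nat.lt_succ_of_le (Nat.floor_le_floor ?_))
    rw [div_le_iff₀ hlam]
    linarith
  · intro j _
    refine (card_le_card fun t ht => ?_).trans
      (card_filter_sum_mem_Ico_le hlam.le hg (a + j * lam))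
    simp only [mem_filter, mem_univ, true_and, Set.mem_Icc, Set.mem_Ico] at ht ⊢
    obtain ⟨⟨hlo, -⟩, hj⟩ := ht
    have := (Nat.floor_eq_iff (div_nonneg (by linarith) hlam.le)).1 hj
    rw [le_div_iff₀ hlam, div_lt_iff₀ hlam] at this
    constructor <;> linarith

end Sperner

theorem abs_sgn_mul (b : Bool) (y : ℝ) : |sgn b * y| = |y| := by
  cases b <;> simp [sgn]

theorem eq_of_sgn_mul_nonneg_iff {b b' : Bool} {y : ℝ} (hy : y ≠ 0)
    (h : 0 ≤ sgn b * y ↔ 0 ≤ sgn b' * y) : b = b' := by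
  cases b <;> cases b' <;> simp only [sgn, Bool.false_eq_true, if_false, if_true] at h
  all_goals first
    | rfl
    | exfalso
      rcases hy.lt_or_gt with hy | hy <;>
        first | linarith [h.1 (by linarith)] | linarith [h.2 (by linarith)]

section Signs

variable {α : Type*} [Fintype α]

theorem sum_sgn_mul_eq (g : α → ℝ) (d : α → Bool) :
    ∑ i, sgn (d i) * g i = 2 * ∑ i with 0 ≤ sgn (d i) * g i, |g i| - ∑ i, |g i| := by
  rw [sum_filter, mul_sum, ← sum_sub_distrib]
  refine sum_congr rfl fun i _ => ?_
  rw [← abs_sgn_mul (d i)]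
  split_ifs with h
  · rw [abs_of_nonneg h]; ring
  · rw [abs_of_neg (not_le.1 h)]; ring

theorem card_abs_add_sum_sgn_mul_le_le [DecidableEq α] {g : α → ℝ} {lam : ℝ} (hlam : 0 < lam)
    (hg : ∀ i, lam ≤ |g i|) (s x : ℝ) :
    #{d : α → Bool | |s + ∑ i, sgn (d i) * g i| ≤ x * lam}
      ≤ (card α).choose (card α / 2) * (⌊x⌋₊ + 1) := by
  set a := (∑ i, |g i| - s - x * lam) / 2 with ha
  refine (card_le_card_of_injOn (fun d => ({i | 0 ≤ sgn (d i) * g i} : Finset α))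
    (t := {t : Finset α | ∑ i ∈ t, |g i| ∈ Set.Icc a (a + x * lam)}) ?_ ?_).trans
    (card_filter_sum_mem_Icc_le hlam hg a x)
  · intro d hd
    simp only [coe_filter, mem_univ, true_and, Set.mem_ofPred_eq, Set.mem_Icc] at hd ⊢
    rw [sum_sgn_mul_eq, abs_le] at hd
    constructor <;> linarith [hd.1, hd.2, ha]
  · intro d _ d' _ hdd'
    funext i
    have hi := congrArg (i ∈ ·) hdd'
    simp only [mem_filter, mem_univ, true_and, eq_iff_iff] at hi
    exact eq_of_sgn_mul_nonneg_iff (abs_pos.1 (hlam.trans_le (hg i))) hi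

end Signs

theorem card_abs_sum_sgn_mul_le_le {ι : Type*} [Fintype ι] [DecidableEq ι] (v : ι → ℝ)
    {lam : ℝ} (hlam : 0 < lam) (x : ℝ) :
    #{b : ι → Bool | |∑ i, sgn (b i) * v i| ≤ x * lam}
      ≤ 2 ^ card {i // ¬lam ≤ |v i|} *
        ((card {i // lam ≤ |v i|}).choose (card {i // lam ≤ |v i|} / 2) * (⌊x⌋₊ + 1)) := by
  set p : ι → Prop := fun i => lam ≤ |v i|
  set e := Equiv.piEquivPiSubtypeProd p (fun _ => Bool)
  have hsplit : ∀ d c, ∑ i, sgn (e.symm (d, c) i) * v i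
      = ∑ i : {i // ¬p i}, sgn (c i) * v i + ∑ i : {i // p i}, sgn (d i) * v i := by
    intro d c
    rw [← Fintype.sum_subtype_add_sum_subtype p, add_comm]
    congr 1 <;> refine sum_congr rfl fun i _ => ?_ <;> simp [e, i.2]
  rw [card_filter, ← e.symm.sum_comp, Fintype.sum_prod_type_right]
  calc _ ≤ ∑ _c : {i // ¬p i} → Bool,
        (card {i // p i}).choose (card {i // p i} / 2) * (⌊x⌋₊ + 1) := by
        refine sum_le_sum fun c _ => ?_
        simp only [hsplit, ← card_filter]
        exact card_abs_add_sum_sgn_mul_le_le (g := fun i : {i // p i} => v i) hlam (·.2) _ x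
    _ = _ := by rw [sum_const, card_univ, Fintype.card_fun, Fintype.card_bool, smul_eq_mul]

theorem card_abs_sum_sgn_mul_le_div_le {ι : Type*} [Fintype ι] [DecidableEq ι] (v : ι → ℝ)
    {lam x : ℝ} (hlam : 0 < lam) (hx : 1 ≤ x) :
    (#{b : ι → Bool | |∑ i, sgn (b i) * v i| ≤ x * lam} : ℝ) / 2 ^ card ι
      ≤ 2 * x / √(card {i // lam ≤ |v i|} + 1) := by
  set n := card {i // lam ≤ |v i|}
  have hcard : card ι = card {i // ¬lam ≤ |v i|} + n := by
    rw [Fintype.card_subtype_compl, Nat.sub_add_cancel (card_subtype_le _)]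
  have hfloor : (⌊x⌋₊ : ℝ) + 1 ≤ 2 * x := by linarith [Nat.floor_le (zero_le_one.trans hx)]
  have hN : (#{b : ι → Bool | |∑ i, sgn (b i) * v i| ≤ x * lam} : ℝ)
      ≤ 2 ^ card {i // ¬lam ≤ |v i|} * (n.choose (n / 2) * (⌊x⌋₊ + 1)) := by
    exact_mod_cast card_abs_sum_sgn_mul_le_le v hlam x
  calc _ ≤ (2 : ℝ) ^ card {i // ¬lam ≤ |v i|} * (n.choose (n / 2) * (⌊x⌋₊ + 1)) / 2 ^ card ι :=
        by gcongr
    _ = (n.choose (n / 2) : ℝ) / 2 ^ n * (⌊x⌋₊ + 1) := by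
        rw [hcard, pow_add]; field_simp
    _ ≤ 1 / √(n + 1) * (2 * x) :=
        mul_le_mul (choose_half_div_two_pow_le n) hfloor (by positivity) (by positivity)
    _ = 2 * x / √(n + 1) := by ring

theorem rowMeasure_apply (m : ℕ) (P : (Fin m → Bool) → Prop) [DecidablePred P] :
    rowMeasure m {b | P b} = ENNReal.ofReal (#{b | P b} / 2 ^ m) := by
  rw [rowMeasure, PMF.toMeasure_uniformOfFintype_apply _ (Set.to_countable _).measurableSet,
    ENNReal.ofReal_div_of_pos (by positivity)]
  simp [Fintype.card_subtype]

open Classical in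
/-- Erdős–Littlewood–Offord inequality: if at least `k ≥ 1` of the reals `v 1, …, v m` satisfy
`|v i| ≥ λ`, and `a 1, …, a m` are iid uniform `±1` signs, then for every `x ≥ 1` one has
`P(|∑ i, a i * v i| ≤ x λ) ≤ C x / √k` for an absolute constant `C`. -/
theorem erdos_littlewood_offord :
    ∃ C : ℝ, 0 < C ∧
      ∀ (m k : ℕ) (lam : ℝ) (v : Fin m → ℝ) (x : ℝ),
        0 < lam → 1 ≤ k → 1 ≤ x →
        k ≤ (Finset.univ.filter fun i => lam ≤ |v i|).card →
        rowMeasure m {b | |∑ i, sgn (b i) * v i| ≤ x * lam} ≤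
          ENNReal.ofReal (C * x / Real.sqrt k) := by
  refine ⟨2, two_pos, fun m k lam v x hlam _ hx hkn => ?_⟩
  have hprob := card_abs_sum_sgn_mul_le_div_le v hlam hx
  rw [Fintype.card_fin] at hprob
  rw [rowMeasure_apply]
  refine ENNReal.ofReal_le_ofReal (hprob.trans ?_)
  gcongr
  rw [Fintype.card_subtype]
  exact_mod_cast hkn.trans (Nat.le_succ _)
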